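/- Let λ ∈ ℂ, p = x − λ ∈ ℂ[x], ι a finite index set, d : ι → ℕ with d(j) ≥ 1 for all j, and V = ⨁_{j ∈ ι} ℂ[x]/(p^{d(j)}). Let i_1 < i_2 < ⋯ < i_m be the distinct values of d, let m_k = #{j ∈ ι : d(j) = i_k} be the multiplicity of block size i_k, set Δ_1 = i_1 and Δ_k = i_k − i_{k−1} for k > 1, and let M_k = m_k + m_{k+1} + ⋯ + m_m. Then for every n ∈ ℕ, the number of fully invariant subspaces of V whose dimension as a complex vector space equals n is the coefficient of x^n in the polynomial f(x) = ∏_{k=1}^{m} ( ∑_{i=0}^{Δ_k} x^{i·M_k} ). -/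

import Mathlib

open Polynomial DirectSum

def FullyInv (lam : ℂ) (ι : Type*) [DecidableEq ι] (d : ι → ℕ)
    (W : Submodule ℂ (⨁ j : ι, Polynomial ℂ ⧸ Ideal.span {(X - C lam) ^ d j})) : Prop :=
  ∀ φ : (⨁ j : ι, Polynomial ℂ ⧸ Ideal.span {(X - C lam) ^ d j}) →ₗ[Polynomial ℂ]
      (⨁ j : ι, Polynomial ℂ ⧸ Ideal.span {(X - C lam) ^ d j}),
    ∀ w ∈ W, φ w ∈ W

/-!
Over the principal ideal domain `R = ℂ[x]` with prime `p = x - λ`, every submodule of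
`R/(p^e)` is `p^s R/(p^e)` for some `s ≤ e`, and any linear map `R/(p^e) → R/(p^f)` sends
`p^s R/(p^e)` into `p^(s + (f - e)) R/(p^f)`, since it kills `p^e`. A fully invariant subspace of
`V = ⨁_j R/(p^(d j))` is an `R`-submodule stable under the projections onto the summands, hence
equals `⨁_j p^(a j) R/(p^(d j))`; stability under multiplication by `p^(d j' - d j)` from the
`j`-th to the `j'`-th summand is exactly `a j' ≤ a j + (d j' - d j)`. So `a` depends only on the
block size, and `b k = i k - a k` is a sequence whose increments `c k` satisfy `0 ≤ c k ≤ Δ k`.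
The dimension `∑_k m_k b_k` equals `∑_k c_k M_k`, so the subspaces of dimension `n` correspond
to the tuples `0 ≤ c ≤ Δ` with `∑_k c_k M_k = n`, which the product `f` counts.
-/

open Finset Function

lemma DirectSum.mem_of_forall_lof_apply_mem {R ι : Type*} [Semiring R] [DecidableEq ι]
    {M : ι → Type*} [∀ i, AddCommMonoid (M i)] [∀ i, Module R (M i)]
    {N : Submodule R (⨁ i, M i)} {v : ⨁ i, M i} (h : ∀ i, lof R ι M i (v i) ∈ N) : v ∈ N := by
  classical
  rw [← DirectSum.sum_support_of v]
  exact Submodule.sum_mem _ fun i _ => h i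

lemma Submodule.exists_isFullyInvariant_restrictScalars_eq {K R M : Type*} [CommSemiring R]
    [Semiring K] [AddCommMonoid M] [Module R M] [Module K M] [SMul K R] [IsScalarTower K R M]
    {W : Submodule K M} (hW : ∀ φ : M →ₗ[R] M, ∀ w ∈ W, φ w ∈ W) :
    ∃ N : Submodule R M, N.IsFullyInvariant ∧ N.restrictScalars K = W :=
  ⟨{ W.toAddSubmonoid with smul_mem' := fun r _ hw => hW (r • LinearMap.id) _ hw },
    fun φ _ hw => hW φ _ hw, rfl⟩

lemma Nat.card_subtype_and_eq_congr {α β : Type*} {P : α → Prop} {Q : β → Prop}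
    (e : {x // P x} ≃ {y // Q y}) {f : α → ℕ} {g : β → ℕ} (h : ∀ x, g (e x) = f x) (n : ℕ) :
    Nat.card {x // P x ∧ f x = n} = Nat.card {y // Q y ∧ g y = n} :=
  Nat.card_congr <| (Equiv.subtypeSubtypeEquivSubtypeInter P (f · = n)).symm.trans <|
    (e.subtypeEquiv fun x => by rw [h]).trans (Equiv.subtypeSubtypeEquivSubtypeInter Q (g · = n))

section PowQuotient

variable {R : Type*} [CommRing R] (p : R)

def powSubmodule (e s : ℕ) : Submodule R (R ⧸ Ideal.span {p ^ e}) :=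
  Submodule.span R {(Ideal.span {p ^ e}).mkQ (p ^ s)}

-- Multiplication by `p ^ (f - e)`; for `f ≤ e` the truncated subtraction makes it the
-- reduction map.
def shiftMap (e f : ℕ) : (R ⧸ Ideal.span {p ^ e}) →ₗ[R] R ⧸ Ideal.span {p ^ f} :=
  (Ideal.span {p ^ e}).liftQ ((Ideal.span {p ^ f}).mkQ ∘ₗ LinearMap.mulLeft R (p ^ (f - e))) <| by
    rw [Ideal.span, Submodule.span_singleton_le_iff_mem, LinearMap.mem_ker, LinearMap.comp_apply,
      LinearMap.mulLeft_apply, ← pow_add, Submodule.mkQ_apply, Submodule.Quotient.mk_eq_zero]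
    exact Ideal.mem_span_singleton.mpr (pow_dvd_pow p (by omega))

variable {p}

@[simp]
lemma shiftMap_mkQ (e f : ℕ) (r : R) :
    shiftMap p e f ((Ideal.span {p ^ e}).mkQ r) = (Ideal.span {p ^ f}).mkQ (p ^ (f - e) * r) :=
  rfl

lemma mkQ_mem_powSubmodule_of_dvd {e s : ℕ} {r : R} (h : p ^ s ∣ r) :
    (Ideal.span {p ^ e}).mkQ r ∈ powSubmodule p e s := by
  obtain ⟨t, rfl⟩ := h
  rw [mul_comm, ← smul_eq_mul, map_smul]
  exact Submodule.smul_mem _ t (Submodule.mem_span_singleton_self _)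

lemma mkQ_mem_powSubmodule_iff {e s : ℕ} (hs : s ≤ e) {r : R} :
    (Ideal.span {p ^ e}).mkQ r ∈ powSubmodule p e s ↔ p ^ s ∣ r := by
  refine ⟨fun h => ?_, mkQ_mem_powSubmodule_of_dvd⟩
  obtain ⟨t, ht⟩ := Submodule.mem_span_singleton.mp h
  rw [← map_smul, ← sub_eq_zero, ← map_sub, Submodule.mkQ_apply, Submodule.Quotient.mk_eq_zero,
    Ideal.mem_span_singleton] at ht
  have : p ^ s ∣ t • p ^ s - r := (pow_dvd_pow p hs).trans ht
  simpa using (dvd_sub_right (dvd_mul_left _ t)).mp this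

lemma powSubmodule_anti {e s t : ℕ} (hst : s ≤ t) : powSubmodule p e t ≤ powSubmodule p e s :=
  (Submodule.span_singleton_le_iff_mem _ _).mpr (mkQ_mem_powSubmodule_of_dvd (pow_dvd_pow p hst))

lemma range_shiftMap (e f : ℕ) : LinearMap.range (shiftMap p e f) = powSubmodule p f (f - e) := by
  ext x
  simp only [LinearMap.mem_range, powSubmodule, Submodule.mem_span_singleton]
  constructor
  · rintro ⟨y, rfl⟩
    obtain ⟨r, rfl⟩ := Submodule.mkQ_surjective _ y
    exact ⟨r, by rw [shiftMap_mkQ, ← map_smul, smul_eq_mul, mul_comm]⟩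
  · rintro ⟨r, rfl⟩
    exact ⟨(Ideal.span {p ^ e}).mkQ r, by rw [shiftMap_mkQ, ← map_smul, smul_eq_mul, mul_comm]⟩

section Domain

variable [IsDomain R]

lemma pow_sub_dvd_of_pow_dvd_pow_mul (hp : p ≠ 0) {e f : ℕ} {q : R} (h : p ^ f ∣ p ^ e * q) :
    p ^ (f - e) ∣ q := by
  rcases le_total f e with hfe | hef
  · simp [Nat.sub_eq_zero_of_le hfe]
  · rwa [← Nat.add_sub_cancel' hef, pow_add, mul_dvd_mul_iff_left (pow_ne_zero _ hp)] at h

lemma shiftMap_injective (hp : p ≠ 0) {e f : ℕ} (hef : e ≤ f) :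
    Function.Injective (shiftMap p e f) := by
  rw [← LinearMap.ker_eq_bot, LinearMap.ker_eq_bot']
  intro x hx
  obtain ⟨r, rfl⟩ := Submodule.mkQ_surjective _ x
  rw [shiftMap_mkQ] at hx
  simp only [Submodule.mkQ_apply, Submodule.Quotient.mk_eq_zero, Ideal.mem_span_singleton] at hx ⊢
  simpa [Nat.sub_sub_self hef] using pow_sub_dvd_of_pow_dvd_pow_mul hp hx

/-- `ψ 1` is killed by `p^e`, hence is a multiple of `p^(f-e)`. -/
lemma map_mem_powSubmodule (hp : p ≠ 0) {e f s : ℕ}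
    (ψ : (R ⧸ Ideal.span {p ^ e}) →ₗ[R] R ⧸ Ideal.span {p ^ f}) {x : R ⧸ Ideal.span {p ^ e}}
    (hx : x ∈ powSubmodule p e s) : ψ x ∈ powSubmodule p f (s + (f - e)) := by
  obtain ⟨q, hq⟩ := Submodule.mkQ_surjective _ (ψ ((Ideal.span {p ^ e}).mkQ 1))
  have hmk : ∀ r : R, (Ideal.span {p ^ e}).mkQ r = r • (Ideal.span {p ^ e}).mkQ 1 := fun r => by
    rw [← map_smul, smul_eq_mul, mul_one]
  have hdvd : p ^ (f - e) ∣ q := by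
    have h0 : (Ideal.span {p ^ f}).mkQ (p ^ e * q) = 0 := by
      rw [← smul_eq_mul, map_smul, hq, ← map_smul, ← hmk, Submodule.mkQ_apply,
        (Submodule.Quotient.mk_eq_zero _).mpr (Ideal.mem_span_singleton_self _), map_zero]
    rw [Submodule.mkQ_apply, Submodule.Quotient.mk_eq_zero, Ideal.mem_span_singleton] at h0
    exact pow_sub_dvd_of_pow_dvd_pow_mul hp h0
  obtain ⟨t, rfl⟩ := Submodule.mem_span_singleton.mp hx
  rw [hmk, smul_smul, map_smul, ← hq, ← map_smul, smul_eq_mul]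
  exact mkQ_mem_powSubmodule_of_dvd (pow_add p s _ ▸ mul_dvd_mul (dvd_mul_left _ _) hdvd)

noncomputable def powSubmoduleEquiv (hp : p ≠ 0) {e s : ℕ} (hs : s ≤ e) :
    (R ⧸ Ideal.span {p ^ (e - s)}) ≃ₗ[R] powSubmodule p e s :=
  (LinearEquiv.ofInjective _ (shiftMap_injective hp (Nat.sub_le e s))).trans
    (LinearEquiv.ofEq _ _ (by rw [range_shiftMap, Nat.sub_sub_self hs]))

variable (hp : Prime p)
include hp

lemma mkQ_pow_mem_powSubmodule_iff {e s t : ℕ} (ht : t ≤ e) :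
    (Ideal.span {p ^ e}).mkQ (p ^ s) ∈ powSubmodule p e t ↔ t ≤ s := by
  rw [mkQ_mem_powSubmodule_iff ht, pow_dvd_pow_iff hp.ne_zero hp.not_isUnit]

lemma powSubmodule_inj {e s t : ℕ} (hs : s ≤ e) (ht : t ≤ e) :
    powSubmodule p e s = powSubmodule p e t ↔ s = t := by
  refine ⟨fun h => le_antisymm ?_ ?_, fun h => h ▸ rfl⟩
  · rw [← mkQ_pow_mem_powSubmodule_iff hp hs, h]
    exact Submodule.mem_span_singleton_self _
  · rw [← mkQ_pow_mem_powSubmodule_iff hp ht, ← h]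
    exact Submodule.mem_span_singleton_self _

lemma exists_eq_powSubmodule [IsPrincipalIdealRing R] {e : ℕ}
    (N : Submodule R (R ⧸ Ideal.span {p ^ e})) : ∃ s ≤ e, N = powSubmodule p e s := by
  set J : Ideal R := N.comap (Ideal.span {p ^ e}).mkQ
  have hpJ : p ^ e ∈ J := by simp [J]
  obtain ⟨s, hs, hJs⟩ :=
    (dvd_prime_pow hp e).mp ((Submodule.IsPrincipal.mem_iff_generator_dvd J).mp hpJ)
  have hJ : J = Ideal.span {p ^ s} := by
    rw [← Ideal.span_singleton_generator J, Ideal.span_singleton_eq_span_singleton]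
    exact hJs
  refine ⟨s, hs, ?_⟩
  rw [powSubmodule, ← Submodule.map_comap_eq_of_surjective (Submodule.mkQ_surjective _) N,
    show N.comap _ = J from rfl, hJ, Ideal.span, Submodule.map_span, Set.image_singleton]

end Domain

end PowQuotient

-- `a` lists the exponents of the submodule `⨁_k p^(a k) R/(p^(e k))`.
def IsAdmissible {κ : Type*} (e a : κ → ℕ) : Prop :=
  (∀ k, a k ≤ e k) ∧ ∀ k k', a k' ≤ a k + (e k' - e k)

section DirectSum

variable {R : Type*} [CommRing R] (p : R) {ι : Type*} (d : ι → ℕ)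

local notation "Q" => fun j => R ⧸ Ideal.span {p ^ d j}

def powDirectSum (a : ι → ℕ) : Submodule R (⨁ j, R ⧸ Ideal.span {p ^ d j}) :=
  (Submodule.pi Set.univ fun j => powSubmodule p (d j) (a j)).comap (DFinsupp.coeFnLinearMap R)

variable {p d}

lemma mem_powDirectSum {a : ι → ℕ} {v : ⨁ j, R ⧸ Ideal.span {p ^ d j}} :
    v ∈ powDirectSum p d a ↔ ∀ j, v j ∈ powSubmodule p (d j) (a j) := by
  simp only [powDirectSum, Submodule.mem_comap, Submodule.mem_pi, Set.mem_univ, true_imp_iff]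
  rfl

lemma comap_lof_powDirectSum [DecidableEq ι] (a : ι → ℕ) (j : ι) :
    (powDirectSum p d a).comap (lof R ι Q j) = powSubmodule p (d j) (a j) := by
  ext x
  simp only [Submodule.mem_comap, mem_powDirectSum]
  refine ⟨fun h => by simpa using h j, fun hx k => ?_⟩
  rcases eq_or_ne k j with rfl | hkj
  · simpa using hx
  · simp [lof_eq_of, DirectSum.of_eq_of_ne _ _ _ hkj]

lemma powDirectSum_inj [DecidableEq ι] [IsDomain R] (hp : Prime p) {a b : ι → ℕ}
    (ha : ∀ j, a j ≤ d j) (hb : ∀ j, b j ≤ d j) :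
    powDirectSum p d a = powDirectSum p d b ↔ a = b := by
  refine ⟨fun h => funext fun j => ?_, fun h => h ▸ rfl⟩
  rw [← powSubmodule_inj hp (ha j) (hb j), ← comap_lof_powDirectSum, h, comap_lof_powDirectSum]

lemma isFullyInvariant_powDirectSum [DecidableEq ι] [IsDomain R] (hp : p ≠ 0) {a : ι → ℕ}
    (ha : IsAdmissible d a) : (powDirectSum p d a).IsFullyInvariant := by
  intro φ v hv
  refine DirectSum.mem_of_forall_lof_apply_mem fun j => mem_powDirectSum.mpr fun k => ?_
  exact powSubmodule_anti (ha.2 j k) (map_mem_powSubmodule hp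
    (component R ι Q k ∘ₗ φ ∘ₗ lof R ι Q j) (mem_powDirectSum.mp hv j))

/-- The exponents are those of the traces `N ∩ R/(p^(d j))`; testing `N` against the
endomorphisms `lof j' ∘ shiftMap ∘ component j` gives admissibility. -/
lemma exists_eq_powDirectSum [DecidableEq ι] [IsDomain R] [IsPrincipalIdealRing R] (hp : Prime p)
    {N : Submodule R (⨁ j, R ⧸ Ideal.span {p ^ d j})} (hN : N.IsFullyInvariant) :
    ∃ a, IsAdmissible d a ∧ N = powDirectSum p d a := by
  choose a had ha using fun j => exists_eq_powSubmodule hp (N.comap (lof R ι Q j))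
  have hmem : ∀ j x, lof R ι Q j x ∈ N ↔ x ∈ powSubmodule p (d j) (a j) := fun j x => by
    rw [← ha j, Submodule.mem_comap]
  have hN_eq : N = powDirectSum p d a := by
    ext v
    rw [mem_powDirectSum]
    refine ⟨fun hv j => (hmem j _).mp (hN (lof R ι Q j ∘ₗ component R ι Q j) hv),
      fun hv => DirectSum.mem_of_forall_lof_apply_mem fun j => (hmem j _).mpr (hv j)⟩
  refine ⟨a, ⟨had, fun j j' => ?_⟩, hN_eq⟩
  have hgen : lof R ι Q j ((Ideal.span {p ^ d j}).mkQ (p ^ a j)) ∈ N :=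
    (hmem j _).mpr (Submodule.mem_span_singleton_self _)
  have hshift := hN (lof R ι Q j' ∘ₗ shiftMap p (d j) (d j') ∘ₗ component R ι Q j) hgen
  rw [Submodule.mem_comap, LinearMap.comp_apply, LinearMap.comp_apply, component.lof_self,
    shiftMap_mkQ, ← pow_add, hmem, mkQ_pow_mem_powSubmodule_iff hp (had j')] at hshift
  omega

end DirectSum

section FiniteDimensional

variable {K : Type*} [Field K] (z : K)

instance (n : ℕ) : Module.Finite K (K[X] ⧸ Ideal.span {(X - C z) ^ n}) :=
  ((monic_X_sub_C z).pow n).finite_adjoinRoot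

lemma finrank_quotient_span_X_sub_C_pow (n : ℕ) :
    Module.finrank K (K[X] ⧸ Ideal.span {(X - C z) ^ n}) = n := by
  rw [finrank_quotient_span_eq_natDegree, natDegree_pow, natDegree_X_sub_C, mul_one]

lemma finrank_powSubmodule {e s : ℕ} (hs : s ≤ e) :
    Module.finrank K (powSubmodule (X - C z) e s) = e - s := by
  rw [← ((powSubmoduleEquiv (X_sub_C_ne_zero z) hs).restrictScalars K).finrank_eq,
    finrank_quotient_span_X_sub_C_pow]

variable {ι : Type*} [Fintype ι] (d : ι → ℕ)

local notation "V" => ⨁ j, K[X] ⧸ Ideal.span {(X - C z) ^ d j}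

lemma finrank_powDirectSum {a : ι → ℕ} (ha : ∀ j, a j ≤ d j) :
    Module.finrank K (powDirectSum (X - C z) d a) = ∑ j, (d j - a j) := by
  have hrange : LinearMap.range (DFinsupp.mapRange.linearMap
      fun j => (powSubmodule (X - C z) (d j) (a j)).subtype) = powDirectSum (X - C z) d a := by
    rw [DFinsupp.range_mapRangeLinearMap]
    simp only [Submodule.range_subtype]
    rfl
  have (j : ι) : Module.Finite K (powSubmodule (X - C z) (d j) (a j)) :=
    .equiv ((powSubmoduleEquiv (X_sub_C_ne_zero z) (ha j)).restrictScalars K)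
  rw [← hrange, ← ((LinearEquiv.ofInjective _ ((DFinsupp.mapRange_injective _
    fun j => map_zero _).mpr fun j => Subtype.val_injective)).restrictScalars K).finrank_eq]
  change Module.finrank K (⨁ j, powSubmodule (X - C z) (d j) (a j)) = _
  rw [Module.finrank_directSum]
  exact sum_congr rfl fun j _ => finrank_powSubmodule z (ha j)

theorem card_fullyInvariant_eq_card_isAdmissible [DecidableEq ι] (n : ℕ) :
    Nat.card {W : Submodule K V //
      (∀ φ : V →ₗ[K[X]] V, ∀ w ∈ W, φ w ∈ W) ∧ Module.finrank K W = n} =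
    Nat.card {a : ι → ℕ // IsAdmissible d a ∧ ∑ j, (d j - a j) = n} := by
  have hp := prime_X_sub_C z
  refine (Nat.card_subtype_and_eq_congr (Equiv.ofBijective
    (fun a => ⟨(powDirectSum (X - C z) d a.1).restrictScalars K,
      fun φ _ hw => isFullyInvariant_powDirectSum hp.ne_zero a.2 φ hw⟩) ⟨?_, ?_⟩)
    (fun a => finrank_powDirectSum z d a.2.1) n).symm
  · exact fun a b h => Subtype.ext <| (powDirectSum_inj hp a.2.1 b.2.1).mp <|
      Submodule.restrictScalars_injective K _ _ (congrArg Subtype.val h)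
  · rintro ⟨W, hW⟩
    obtain ⟨N, hN, rfl⟩ := Submodule.exists_isFullyInvariant_restrictScalars_eq hW
    obtain ⟨a, ha, rfl⟩ := exists_eq_powDirectSum hp hN
    exact ⟨⟨a, ha⟩, rfl⟩

end FiniteDimensional

section Admissible

variable {ι κ : Type*} {e a : κ → ℕ}

lemma IsAdmissible.apply_eq_of_eq (ha : IsAdmissible e a) {k k' : κ} (h : e k = e k') :
    a k = a k' := by
  have := ha.2 k k'
  have := ha.2 k' k
  omega

lemma isAdmissible_comp_iff {g : ι → κ} (hg : Surjective g) :
    IsAdmissible (e ∘ g) (a ∘ g) ↔ IsAdmissible e a := by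
  simp only [IsAdmissible, comp_apply, hg.forall]

lemma card_isAdmissible_comp [Fintype ι] [Fintype κ] [DecidableEq κ] (e : κ → ℕ) {g : ι → κ}
    (hg : Surjective g) (n : ℕ) :
    Nat.card {a : ι → ℕ // IsAdmissible (e ∘ g) a ∧ ∑ j, (e (g j) - a j) = n} =
      Nat.card {a : κ → ℕ // IsAdmissible e a ∧ ∑ k, #{j | g j = k} * (e k - a k) = n} := by
  have hfactor (a : {a : ι → ℕ // IsAdmissible (e ∘ g) a}) : (a.1 ∘ surjInv hg) ∘ g = a.1 :=
    funext fun j => a.2.apply_eq_of_eq (by simp [surjInv_eq hg])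
  refine (Nat.card_subtype_and_eq_congr
    { toFun a := ⟨a.1 ∘ g, (isAdmissible_comp_iff hg).mpr a.2⟩
      invFun a := ⟨a.1 ∘ surjInv hg, (isAdmissible_comp_iff hg).mp (by rw [hfactor a]; exact a.2)⟩
      left_inv a := Subtype.ext <| funext fun k => by simp [surjInv_eq hg]
      right_inv a := Subtype.ext (hfactor a) } (fun a => ?_) n).symm
  show ∑ j, (e (g j) - a.1 (g j)) = _
  rw [← sum_fiberwise' univ g fun k => e k - a.1 k]
  simp only [sum_const, smul_eq_mul]

lemma isAdmissible_iff_monotone [LinearOrder κ] (he : Monotone e) :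
    IsAdmissible e a ↔ a ≤ e ∧ Monotone a ∧ Monotone (e - a) := by
  refine ⟨fun ha => ⟨ha.1, fun k k' hk => ?_, fun k k' hk => ?_⟩,
    fun ⟨hae, ha, hea⟩ => ⟨hae, fun k k' => ?_⟩⟩
  · have hek : e k ≤ e k' := he hk
    have := ha.2 k' k
    omega
  · have hek : e k ≤ e k' := he hk
    have := ha.2 k k'
    have := ha.1 k
    have := ha.1 k'
    simp only [Pi.sub_apply]
    omega
  · rcases le_total k k' with hk | hk
    · have hek : e k ≤ e k' := he hk
      have h : e k - a k ≤ e k' - a k' := hea hk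
      have hk₁ : a k ≤ e k := hae k
      have hk₂ : a k' ≤ e k' := hae k'
      omega
    · exact (ha hk).trans (Nat.le_add_right _ _)

end Admissible

section FinSequence

variable {m : ℕ}

def prevVal (g : Fin m → ℕ) (k : Fin m) : ℕ :=
  if h : k.val = 0 then 0 else g ⟨k.val - 1, by omega⟩

def increment (g : Fin m → ℕ) (k : Fin m) : ℕ := g k - prevVal g k

def partialSum (c : Fin m → ℕ) (k : Fin m) : ℕ := ∑ l ∈ Iic k, c l

lemma prevVal_le {g : Fin m → ℕ} (hg : Monotone g) (k : Fin m) : prevVal g k ≤ g k := by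
  unfold prevVal
  split_ifs
  · exact Nat.zero_le _
  · exact hg (Fin.le_def.mpr (by simp))

lemma prevVal_partialSum (c : Fin m → ℕ) (k : Fin m) :
    prevVal (partialSum c) k = ∑ l ∈ Iio k, c l := by
  unfold prevVal partialSum
  split_ifs with hk
  · exact (sum_eq_zero fun l hl => absurd (Fin.lt_def.mp (mem_Iio.mp hl)) (by omega)).symm
  · congr 1
    ext l
    simp only [mem_Iic, mem_Iio, Fin.le_def, Fin.lt_def]
    omega

lemma partialSum_eq_add_prevVal (c : Fin m → ℕ) (k : Fin m) :
    partialSum c k = c k + prevVal (partialSum c) k := by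
  rw [prevVal_partialSum, partialSum, ← Iio_insert, sum_insert notMem_Iio_self]

lemma increment_partialSum (c : Fin m → ℕ) : increment (partialSum c) = c :=
  funext fun k => by rw [increment, partialSum_eq_add_prevVal c k, Nat.add_sub_cancel]

lemma partialSum_increment {b : Fin m → ℕ} (hb : Monotone b) : partialSum (increment b) = b := by
  funext k
  induction k using WellFoundedLT.induction with
  | _ k ih =>
    have hprev : prevVal (partialSum (increment b)) k = prevVal b k := by
      unfold prevVal
      split_ifs
      · rfl
      · exact ih _ (Fin.lt_def.mpr (by simp; omega))
    rw [partialSum_eq_add_prevVal, hprev, increment, Nat.sub_add_cancel (prevVal_le hb k)]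

lemma monotone_partialSum (c : Fin m → ℕ) : Monotone (partialSum c) :=
  fun _ _ h => sum_le_sum_of_subset (Iic_subset_Iic.mpr h)

lemma partialSum_le_partialSum {c c' : Fin m → ℕ} (h : c ≤ c') : partialSum c ≤ partialSum c' :=
  fun _ => sum_le_sum fun l _ => h l

lemma partialSum_tsub {c c' : Fin m → ℕ} (h : c ≤ c') :
    partialSum (c' - c) = partialSum c' - partialSum c :=
  funext fun _ => sum_tsub_distrib _ fun l _ => h l

lemma increment_tsub_le {a e : Fin m → ℕ} (hae : a ≤ e) (ha : Monotone a) (k : Fin m) :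
    increment (e - a) k ≤ increment e k := by
  unfold increment prevVal
  split_ifs with hk
  · simp
  · have hk' : a ⟨k.val - 1, by omega⟩ ≤ a k := ha (Fin.le_def.mpr (by simp))
    have h₁ : a k ≤ e k := hae k
    have h₂ : a ⟨k.val - 1, by omega⟩ ≤ e ⟨k.val - 1, by omega⟩ := hae _
    simp only [Pi.sub_apply]
    omega

lemma sum_mul_partialSum (mult M c : Fin m → ℕ) (hM : ∀ k, M k = ∑ k' ∈ Ici k, mult k') :
    ∑ k, mult k * partialSum c k = ∑ l, c l * M l := by
  calc ∑ k, mult k * partialSum c k = ∑ k, ∑ l ∈ Iic k, mult k * c l := by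
        simp only [partialSum, mul_sum]
    _ = ∑ l, ∑ k ∈ Ici l, mult k * c l := sum_comm' fun k l => by simp
    _ = ∑ l, c l * M l := by simp only [hM, mul_sum, mul_comm]

end FinSequence

lemma card_isAdmissible_partialSum {m : ℕ} (Δ mult M : Fin m → ℕ)
    (hM : ∀ k, M k = ∑ k' ∈ Ici k, mult k') (n : ℕ) :
    Nat.card {a // IsAdmissible (partialSum Δ) a ∧
        ∑ k, mult k * (partialSum Δ k - a k) = n} =
      Nat.card {c : Fin m → ℕ // (∀ k, c k ≤ Δ k) ∧ ∑ k, c k * M k = n} := by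
  have hΔ := monotone_partialSum Δ
  have hle (c : {c : Fin m → ℕ // ∀ k, c k ≤ Δ k}) : partialSum c.1 ≤ partialSum Δ :=
    partialSum_le_partialSum c.2
  refine (Nat.card_subtype_and_eq_congr
    { toFun c := ⟨partialSum Δ - partialSum c.1, (isAdmissible_iff_monotone hΔ).mpr
        ⟨tsub_le_self, partialSum_tsub c.2 ▸ monotone_partialSum _, by
          rw [tsub_tsub_cancel_of_le (hle c)]; exact monotone_partialSum _⟩⟩
      invFun a := ⟨increment (partialSum Δ - a.1), fun k => by
        have ha := (isAdmissible_iff_monotone hΔ).mp a.2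
        simpa [increment_partialSum] using increment_tsub_le ha.1 ha.2.1 k⟩
      left_inv c := Subtype.ext <| by
        simp only [tsub_tsub_cancel_of_le (hle c), increment_partialSum]
      right_inv a := Subtype.ext <| by
        have ha := (isAdmissible_iff_monotone hΔ).mp a.2
        simp only [partialSum_increment ha.2.2, tsub_tsub_cancel_of_le ha.1] }
    (fun c => ?_) n).symm
  simp only [Equiv.coe_fn_mk, Pi.sub_apply, tsub_tsub_cancel_of_le (hle c _)]
  exact sum_mul_partialSum mult M c.1 hM

lemma card_le_and_sum_mul_eq_coeff {κ : Type*} [Fintype κ] [DecidableEq κ] (Δ M : κ → ℕ) (n : ℕ) :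
    Nat.card {c : κ → ℕ // (∀ k, c k ≤ Δ k) ∧ ∑ k, c k * M k = n} =
      (∏ k, ∑ a ∈ range (Δ k + 1), (Polynomial.X : Polynomial ℕ) ^ (a * M k)).coeff n := by
  rw [prod_univ_sum, Polynomial.finsetSum_coeff]
  simp only [prod_pow_eq_pow_sum, Polynomial.coeff_X_pow]
  rw [sum_boole, Nat.cast_id, ← Nat.card_eq_finsetCard]
  exact Nat.card_congr (Equiv.subtypeEquivRight fun c => by
    simp [Fintype.mem_piFinset, eq_comm])

theorem stmt15_general (lam : ℂ) (ι : Type*) [Fintype ι] [DecidableEq ι]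
    (d : ι → ℕ)
    (m : ℕ) (i : Fin m → ℕ) (hmono : StrictMono i)
    (hrange : ∀ j : ι, ∃ k : Fin m, d j = i k) (hsur : ∀ k : Fin m, ∃ j : ι, d j = i k)
    (Δ : Fin m → ℕ)
    (hΔ : ∀ k : Fin m, Δ k = if k.val = 0 then i k
      else i k - i ⟨k.val - 1, Nat.lt_of_le_of_lt (Nat.sub_le _ _) k.isLt⟩)
    (mult : Fin m → ℕ)
    (hmult : ∀ k : Fin m, mult k = (Finset.univ.filter fun j : ι => d j = i k).card)
    (M : Fin m → ℕ) (hM : ∀ k : Fin m, M k = ∑ k' ∈ Finset.Ici k, mult k')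
    (f : Polynomial ℕ)
    (hf : f = ∏ k : Fin m,
      ∑ a ∈ Finset.range (Δ k + 1), (Polynomial.X : Polynomial ℕ) ^ (a * M k)) :
    ∀ n : ℕ,
      Nat.card {W : Submodule ℂ (⨁ j : ι, Polynomial ℂ ⧸ Ideal.span {(X - C lam) ^ d j}) //
          FullyInv lam ι d W ∧ Module.finrank ℂ W = n} = f.coeff n := by
  intro n
  choose kof hkof using hrange
  obtain rfl : d = i ∘ kof := funext hkof
  have hsurj : Surjective kof := fun k => (hsur k).imp fun j hj => hmono.injective hj
  have hmult : mult = fun k => #{j | kof j = k} :=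
    funext fun k => by simp [hmult, hmono.injective.eq_iff]
  have hi : i = partialSum Δ := by
    have : Δ = increment i := funext fun k => by
      rw [hΔ k, increment, prevVal]
      split_ifs <;> simp
    rw [this, partialSum_increment hmono.monotone]
  calc _ = Nat.card {a : ι → ℕ // IsAdmissible (i ∘ kof) a ∧ ∑ j, (i (kof j) - a j) = n} :=
        card_fullyInvariant_eq_card_isAdmissible lam _ n
    _ = Nat.card {a : Fin m → ℕ // IsAdmissible i a ∧ ∑ k, mult k * (i k - a k) = n} :=
        hmult ▸ card_isAdmissible_comp i hsurj n
    _ = Nat.card {c : Fin m → ℕ // (∀ k, c k ≤ Δ k) ∧ ∑ k, c k * M k = n} :=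
        hi ▸ card_isAdmissible_partialSum Δ mult M hM n
    _ = f.coeff n := hf ▸ card_le_and_sum_mul_eq_coeff Δ M n

/-- For `V = ⨁_j ℂ[x]/(p^{d j})` with distinct block sizes `i 0 < ⋯ < i (m-1)`, block
multiplicities `mult k = #{j : d j = i k}`, block increments `Δ 0 = i 0`,
`Δ k = i k - i (k-1)`, and tail sums `M k = ∑_{k' ≥ k} mult k'`, the number of fully
invariant subspaces of `V` of complex dimension `n` is the coefficient of `x^n` in
`f(x) = ∏_k (∑_{i=0}^{Δ_k} x^{i·M_k})`. -/
theorem stmt15 (lam : ℂ) (ι : Type*) [Fintype ι] [DecidableEq ι]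
    (d : ι → ℕ) (hd : ∀ j, 1 ≤ d j)
    (m : ℕ) (i : Fin m → ℕ) (hmono : StrictMono i)
    (hrange : ∀ j : ι, ∃ k : Fin m, d j = i k) (hsur : ∀ k : Fin m, ∃ j : ι, d j = i k)
    (Δ : Fin m → ℕ)
    (hΔ : ∀ k : Fin m, Δ k = if k.val = 0 then i k
      else i k - i ⟨k.val - 1, Nat.lt_of_le_of_lt (Nat.sub_le _ _) k.isLt⟩)
    (mult : Fin m → ℕ)
    (hmult : ∀ k : Fin m, mult k = (Finset.univ.filter fun j : ι => d j = i k).card)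
    (M : Fin m → ℕ) (hM : ∀ k : Fin m, M k = ∑ k' ∈ Finset.Ici k, mult k')
    (f : Polynomial ℕ)
    (hf : f = ∏ k : Fin m,
      ∑ a ∈ Finset.range (Δ k + 1), (Polynomial.X : Polynomial ℕ) ^ (a * M k)) :
    ∀ n : ℕ,
      Nat.card {W : Submodule ℂ (⨁ j : ι, Polynomial ℂ ⧸ Ideal.span {(X - C lam) ^ d j}) //
          FullyInv lam ι d W ∧ Module.finrank ℂ W = n} = f.coeff n :=
  stmt15_general lam ι d m i hmono hrange hsur Δ hΔ mult hmult M hM f hf
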